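/- arXiv:1111.1348 — 4 statements merged into one kernel-verified Lean document; each statement's English description precedes it below -/
import Mathlib

section
/- If L is a full-rank lattice in ℝⁿ with covering radius ν(L) and b > 2ν(L), then (b − 2ν(L))ⁿ / det(L) ≤ |L ∩ [0,b)ⁿ| ≤ (b + 2ν(L))ⁿ / det(L). -/
open scoped RealInnerProductSpace

/-- The half-open cube `[0,r)ⁿ` in ℝⁿ. -/
def cube (n : ℕ) (r : ℝ) : Set (EuclideanSpace ℝ (Fin n)) :=
  {x | ∀ i, 0 ≤ x i ∧ x i < r}

/-- The covering radius of a set `L ⊆ ℝⁿ`: the least `r ≥ 0` such that every point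
of ℝⁿ is within distance `r` of some point of `L`. -/
noncomputable def covRad {n : ℕ} (L : Set (EuclideanSpace ℝ (Fin n))) : ℝ :=
  sInf {r : ℝ | 0 ≤ r ∧ ∀ x : EuclideanSpace ℝ (Fin n), ∃ v ∈ L, dist x v ≤ r}

/-- The covolume of the full-rank lattice spanned by the basis `b`:
the absolute value of the determinant of the matrix of basis vectors. -/
noncomputable def covDet {n : ℕ} (b : Module.Basis (Fin n) ℝ (EuclideanSpace ℝ (Fin n))) : ℝ :=
  |(Matrix.of fun i j => b i j : Matrix (Fin n) (Fin n) ℝ).det|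

/-- The first successive minimum of `L`: the infimum of the norms of nonzero elements. -/
noncomputable def firstMin {n : ℕ} (L : Set (EuclideanSpace ℝ (Fin n))) : ℝ :=
  sInf {r : ℝ | ∃ v ∈ L, v ≠ 0 ∧ ‖v‖ = r}

/-!
The closed Voronoi cell `V` of the lattice at the origin is a fundamental domain (its translates
overlap only on perpendicular bisectors, which are null), so `vol V = det L`, and `V` lies in the
closed ball of radius `ν = ν(L)` around `0`. Hence the translates `v + V` by the lattice points
`v ∈ [0,b)ⁿ` are a.e. disjoint, all lie in the box `[-ν, b+ν)ⁿ`, and cover a.e. point of the box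
`[ν, b-ν)ⁿ`. Comparing volumes gives both bounds.
-/
open MeasureTheory Metric Module Submodule
open scoped Pointwise

section Voronoi

variable {E : Type*} [NormedAddCommGroup E] (L : Submodule ℤ E)

def voronoiCell : Set E :=
  {x | ∀ v ∈ L, ‖x‖ ≤ dist x v}

variable {L}

lemma mem_vadd_voronoiCell_iff {v x : E} :
    x ∈ v +ᵥ voronoiCell L ↔ ∀ w ∈ L, dist x v ≤ dist x (v + w) := by
  simp only [Set.mem_vadd_set_iff_neg_vadd_mem, voronoiCell, Set.mem_ofPred_eq, vadd_eq_add,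
    dist_eq_norm]
  refine forall₂_congr fun w _ => ?_
  rw [neg_add_eq_sub, sub_sub, norm_sub_rev x v]

lemma isClosed_voronoiCell : IsClosed (voronoiCell L) := by
  simp only [voronoiCell, Set.ofPred_forall]
  exact isClosed_biInter fun _ _ =>
    isClosed_le continuous_norm (continuous_id.dist continuous_const)

lemma exists_neg_vadd_mem_voronoiCell [NormedSpace ℝ E] [ProperSpace E] [DiscreteTopology L]
    (x : E) : ∃ v ∈ L, -v +ᵥ x ∈ voronoiCell L := by
  have hL : IsClosed (L : Set E) := AddSubgroup.isClosed_of_discrete (H := L.toAddSubgroup)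
  obtain ⟨v, hvL, hv⟩ := hL.exists_infDist_eq_dist ⟨0, L.zero_mem⟩ x
  refine ⟨v, hvL, ?_⟩
  rw [← Set.mem_vadd_set_iff_neg_vadd_mem, mem_vadd_voronoiCell_iff]
  exact fun w hw => hv ▸ infDist_le_dist_of_mem (L.add_mem hvL hw)

lemma inter_vadd_voronoiCell_subset_perpBisector [InnerProductSpace ℝ E] {v w : E}
    (hv : v ∈ L) (hw : w ∈ L) :
    (v +ᵥ voronoiCell L) ∩ (w +ᵥ voronoiCell L) ⊆ AffineSubspace.perpBisector v w := by
  rintro x ⟨hxv, hxw⟩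
  rw [mem_vadd_voronoiCell_iff] at hxv hxw
  have h₁ := hxv (w - v) (L.sub_mem hw hv)
  have h₂ := hxw (v - w) (L.sub_mem hv hw)
  rw [add_sub_cancel] at h₁ h₂
  exact AffineSubspace.mem_perpBisector_iff_dist_eq.mpr (le_antisymm h₁ h₂)

lemma isAddFundamentalDomain_voronoiCell [InnerProductSpace ℝ E] [FiniteDimensional ℝ E]
    [DiscreteTopology L] [MeasurableSpace E] [BorelSpace E] (μ : Measure E)
    [μ.IsAddHaarMeasure] : IsAddFundamentalDomain L (voronoiCell L) μ where
  nullMeasurableSet := isClosed_voronoiCell.measurableSet.nullMeasurableSet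
  ae_covers := Filter.Eventually.of_forall fun x => by
    obtain ⟨v, hv, hx⟩ := exists_neg_vadd_mem_voronoiCell (L := L) x
    exact ⟨⟨-v, L.neg_mem hv⟩, hx⟩
  aedisjoint := by
    rintro v w hvw
    refine measure_mono_null (inter_vadd_voronoiCell_subset_perpBisector v.2 w.2)
      (Measure.addHaar_affineSubspace μ _ fun h => hvw ?_)
    exact Subtype.ext (AffineSubspace.perpBisector_eq_top.mp h)

lemma MeasureTheory.IsAddFundamentalDomain.measure_voronoiCell [InnerProductSpace ℝ E]
    [FiniteDimensional ℝ E] [DiscreteTopology L] [Countable L] [MeasurableSpace E] [BorelSpace E]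
    {μ : Measure E} [μ.IsAddHaarMeasure] {F : Set E} (hF : IsAddFundamentalDomain L F μ) :
    μ (voronoiCell L) = μ F :=
  have : VAddInvariantMeasure L E μ :=
    inferInstanceAs (VAddInvariantMeasure L.toAddSubgroup E μ)
  (isAddFundamentalDomain_voronoiCell μ).measure_eq hF

end Voronoi

lemma vadd_subset_closedBall {E : Type*} [NormedAddCommGroup E] {F : Set E} {ρ : ℝ}
    (hFρ : F ⊆ closedBall 0 ρ) (v : E) : v +ᵥ F ⊆ closedBall v ρ := by
  simpa [Metric.vadd_closedBall] using Set.vadd_set_mono (a := v) hFρ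

section Counting

variable {E : Type*} [NormedAddCommGroup E] [MeasurableSpace E]
  {μ : Measure E} [μ.IsAddLeftInvariant] {L : Submodule ℤ E} {F : Set E} {ρ : ℝ}

lemma MeasureTheory.IsAddFundamentalDomain.card_mul_measure_le [BorelSpace E]
    (hF : IsAddFundamentalDomain L F μ)
    (hFρ : F ⊆ closedBall 0 ρ) {s : Finset E} (hs : (s : Set E) ⊆ L) {B : Set E}
    (hB : ∀ v ∈ s, closedBall v ρ ⊆ B) : s.card * μ F ≤ μ B :=
  calc s.card * μ F = ∑ v ∈ s, μ (v +ᵥ F) := by simp [measure_vadd]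
    _ = μ (⋃ v ∈ s, v +ᵥ F) := by
      refine (measure_biUnion_finset₀ (fun v hv w hw hvw => ?_) fun v _ =>
        hF.nullMeasurableSet.vadd v).symm
      exact hF.aedisjoint (i := ⟨v, hs hv⟩) (j := ⟨w, hs hw⟩) fun h => hvw congr(Subtype.val $h)
    _ ≤ μ B := measure_mono <| Set.iUnion₂_subset fun v hv =>
      (vadd_subset_closedBall hFρ v).trans (hB v hv)

lemma MeasureTheory.IsAddFundamentalDomain.measure_le_card_mul
    (hF : IsAddFundamentalDomain L F μ)
    (hFρ : F ⊆ closedBall 0 ρ) {s : Finset E} {B : Set E}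
    (hB : ∀ x ∈ B, ∀ v ∈ L, dist x v ≤ ρ → v ∈ s) : μ B ≤ s.card * μ F := by
  have hcover : B ≤ᵐ[μ] ⋃ v ∈ s, v +ᵥ F := by
    filter_upwards [hF.ae_covers] with x ⟨g, hg⟩ hxB
    have hx : x ∈ -(g : E) +ᵥ F :=
      Set.mem_vadd_set_iff_neg_vadd_mem.mpr (by rw [neg_neg]; exact hg)
    exact Set.mem_biUnion (hB x hxB _ (L.neg_mem g.2) (vadd_subset_closedBall hFρ _ hx)) hx
  calc μ B ≤ μ (⋃ v ∈ s, v +ᵥ F) := measure_mono_ae hcover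
    _ ≤ ∑ v ∈ s, μ (v +ᵥ F) := measure_biUnion_finset_le s _
    _ = s.card * μ F := by simp [measure_vadd]

end Counting

section Euclidean

variable {n : ℕ}

def box (n : ℕ) (a d : ℝ) : Set (EuclideanSpace ℝ (Fin n)) :=
  {x | ∀ i, a ≤ x i ∧ x i < d}

lemma box_zero_eq_cube (r : ℝ) : box n 0 r = cube n r := rfl

lemma volume_box (a d : ℝ) : volume (box n a d) = ENNReal.ofReal (d - a) ^ n := by
  have hbox : box n a d = (MeasurableEquiv.toLp 2 (Fin n → ℝ)).symm ⁻¹'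
      Set.univ.pi fun _ => Set.Ico a d := by
    ext x
    simp [box, Set.mem_pi, Set.mem_Ico]
  rw [hbox, (EuclideanSpace.volume_preserving_symm_measurableEquiv_toLp (Fin n)).measure_preimage
    (MeasurableSet.univ_pi fun _ => measurableSet_Ico).nullMeasurableSet, volume_pi_pi]
  simp [Real.volume_Ico]

lemma isBounded_box (a d : ℝ) : Bornology.IsBounded (box n a d) := by
  refine ((EuclideanSpace.equiv (Fin n) ℝ).symm.lipschitz.isBounded_image
    (isBounded_Icc (fun _ => a) fun _ => d)).subset fun x hx => ?_
  exact ⟨EuclideanSpace.equiv (Fin n) ℝ x, ⟨fun i => (hx i).1, fun i => (hx i).2.le⟩,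
    ContinuousLinearEquiv.symm_apply_apply _ x⟩

lemma mem_box_of_dist_le {a d ρ : ℝ} {x y : EuclideanSpace ℝ (Fin n)} (hx : x ∈ box n a d)
    (hxy : dist x y ≤ ρ) : y ∈ box n (a - ρ) (d + ρ) := fun i => by
  have hi : |x i - y i| ≤ ρ := (PiLp.dist_apply_le x y i).trans hxy
  have := hx i
  constructor <;> linarith [abs_le.mp hi]

end Euclidean

section Lattice

variable {n : ℕ} (b : Basis (Fin n) ℝ (EuclideanSpace ℝ (Fin n)))

lemma volume_fundamentalDomain_eq_covDet :
    volume (ZSpan.fundamentalDomain b) = ENNReal.ofReal (covDet b) := by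
  let e := (EuclideanSpace.equiv (Fin n) ℝ).toLinearEquiv
  have hpre : (MeasurableEquiv.toLp 2 (Fin n → ℝ)).symm ⁻¹'
      ZSpan.fundamentalDomain (b.map e) = ZSpan.fundamentalDomain b := by
    rw [← ZSpan.map_fundamentalDomain b e]
    exact Set.preimage_image_eq _ (EquivLike.injective _)
  rw [← hpre, (EuclideanSpace.volume_preserving_symm_measurableEquiv_toLp (Fin n)).measure_preimage
    (ZSpan.fundamentalDomain_measurableSet (b.map e)).nullMeasurableSet,
    ZSpan.volume_fundamentalDomain]
  rfl

lemma covDet_pos : 0 < covDet b := by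
  have h := ZSpan.measure_fundamentalDomain_ne_zero b (μ := volume)
  rw [volume_fundamentalDomain_eq_covDet, Ne, ENNReal.ofReal_eq_zero, not_le] at h
  exact h

lemma volume_voronoiCell_span :
    volume (voronoiCell (span ℤ (Set.range b))) = ENNReal.ofReal (covDet b) := by
  rw [← volume_fundamentalDomain_eq_covDet]
  exact (ZSpan.isAddFundamentalDomain b volume).measure_voronoiCell

lemma covRad_set_nonempty_span :
    {r : ℝ | 0 ≤ r ∧ ∀ x : EuclideanSpace ℝ (Fin n),
      ∃ v ∈ (span ℤ (Set.range b) : Set (EuclideanSpace ℝ (Fin n))), dist x v ≤ r}.Nonempty := by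
  obtain ⟨R, hR⟩ := isBounded_iff_forall_norm_le.1 (ZSpan.fundamentalDomain_isBounded b)
  refine ⟨max R 0, le_max_right _ _, fun x => ⟨ZSpan.floor b x, SetLike.coe_mem _, ?_⟩⟩
  rw [dist_eq_norm, ← ZSpan.fract_apply]
  exact (hR _ (ZSpan.fract_mem_fundamentalDomain b x)).trans (le_max_left _ _)

lemma covRad_span_nonneg : 0 ≤ covRad (span ℤ (Set.range b) : Set (EuclideanSpace ℝ (Fin n))) :=
  le_csInf (covRad_set_nonempty_span b) fun _ hr => hr.1

lemma voronoiCell_span_subset_closedBall_covRad :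
    voronoiCell (span ℤ (Set.range b)) ⊆
      closedBall 0 (covRad (span ℤ (Set.range b) : Set (EuclideanSpace ℝ (Fin n)))) :=
  fun x hx => mem_closedBall_zero_iff.mpr <|
    le_csInf (covRad_set_nonempty_span b) fun _ ⟨_, hr⟩ =>
      let ⟨v, hv, hxv⟩ := hr x
      (hx v hv).trans hxv

end Lattice

theorem lattice_cube_count_general {n : ℕ}
    (b : Module.Basis (Fin n) ℝ (EuclideanSpace ℝ (Fin n)))
    (L : Submodule ℤ (EuclideanSpace ℝ (Fin n)))
    (hL : L = Submodule.span ℤ (Set.range b))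
    (r : ℝ) (hr : r > 2 * covRad (L : Set (EuclideanSpace ℝ (Fin n)))) :
    (r - 2 * covRad (L : Set (EuclideanSpace ℝ (Fin n))))^n / covDet b
        ≤ (Nat.card ↥((L : Set (EuclideanSpace ℝ (Fin n))) ∩ cube n r) : ℝ) ∧
    (Nat.card ↥((L : Set (EuclideanSpace ℝ (Fin n))) ∩ cube n r) : ℝ)
        ≤ (r + 2 * covRad (L : Set (EuclideanSpace ℝ (Fin n))))^n / covDet b := by
  subst hL
  have hν := covRad_span_nonneg b
  have hF := isAddFundamentalDomain_voronoiCell (L := span ℤ (Set.range b)) volume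
  have hFν := voronoiCell_span_subset_closedBall_covRad b
  set ν := covRad (span ℤ (Set.range b) : Set (EuclideanSpace ℝ (Fin n)))
  have hfin : ((span ℤ (Set.range b) : Set _) ∩ cube n r).Finite := by
    rw [Set.inter_comm, ← box_zero_eq_cube]
    exact ZSpan.setFinite_inter b (isBounded_box 0 r)
  set s := hfin.toFinset
  have hlower := hF.measure_le_card_mul hFν (s := s) (B := box n ν (r - ν))
    fun x hx v hv hxv => hfin.mem_toFinset.mpr
      ⟨hv, by simpa [box_zero_eq_cube] using mem_box_of_dist_le hx hxv⟩
  have hupper := hF.card_mul_measure_le hFν (s := s) (B := box n (-ν) (r + ν))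
    (fun v hv => (hfin.mem_toFinset.mp hv).1) fun v hv y hy => by
      simpa using mem_box_of_dist_le (hfin.mem_toFinset.mp hv).2 (dist_comm y v ▸ hy)
  rw [volume_box, volume_voronoiCell_span, ← ENNReal.ofReal_pow (by linarith),
    ← ENNReal.ofReal_natCast, ← ENNReal.ofReal_mul (by positivity)] at hlower hupper
  rw [show r - ν - ν = r - 2 * ν by ring] at hlower
  rw [show r + ν - -ν = r + 2 * ν by ring] at hupper
  have hdet := covDet_pos b
  rw [Nat.card_coe_set_eq, Set.ncard_eq_toFinset_card _ hfin, div_le_iff₀ hdet, le_div_iff₀ hdet]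
  exact ⟨(ENNReal.ofReal_le_ofReal_iff (by positivity)).mp hlower,
    (ENNReal.ofReal_le_ofReal_iff (pow_nonneg (by linarith) n)).mp hupper⟩

/-- If `L` is a full-rank lattice in ℝⁿ with covering radius `ν(L)` and `b > 2ν(L)`,
then `(b − 2ν(L))ⁿ / det(L) ≤ |L ∩ [0,b)ⁿ| ≤ (b + 2ν(L))ⁿ / det(L)`. -/
theorem lattice_cube_count {n : ℕ} (hn : 0 < n)
    (b : Module.Basis (Fin n) ℝ (EuclideanSpace ℝ (Fin n)))
    (L : Submodule ℤ (EuclideanSpace ℝ (Fin n)))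
    (hL : L = Submodule.span ℤ (Set.range b))
    (r : ℝ) (hr : r > 2 * covRad (L : Set (EuclideanSpace ℝ (Fin n)))) :
    (r - 2 * covRad (L : Set (EuclideanSpace ℝ (Fin n))))^n / covDet b
        ≤ (Nat.card ↥((L : Set (EuclideanSpace ℝ (Fin n))) ∩ cube n r) : ℝ) ∧
    (Nat.card ↥((L : Set (EuclideanSpace ℝ (Fin n))) ∩ cube n r) : ℝ)
        ≤ (r + 2 * covRad (L : Set (EuclideanSpace ℝ (Fin n))))^n / covDet b :=
  lattice_cube_count_general b L hL r hr
end

section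
/- Let L = ℤv be a one-dimensional lattice with v > 0, and let b ≥ 3v + 1. Then two elements chosen independently and uniformly at random from L ∩ [0, b) generate L with probability greater than 3³/(π²·2³) > 1/3. -/
/-!
Every point of `L ∩ [0, r)` is `k • v` with `0 ≤ k < n := ⌈r / v⌉₊`, and `k • v, l • v`
generate `L` exactly when `gcd(k, l) = 1`. A non-coprime pair in `{1, …, m}²` has a common prime
factor `p`, which accounts for at most `⌊m / p⌋²` pairs, so at most `m² ∑ₚ p⁻² ≤
(1/4 + 1/9 + 1/25 + 1/6) m²` pairs fail. Together with the coprime pairs `(0, 1)` and `(1, 0)`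
this leaves more than `27 / (8π²) ≈ 0.342` of the `n² = (m + 1)²` pairs generating, for all `n ≥ 2`.
-/

open Finset Function Real

theorem AddSubgroup.closure_pair_zsmul {A : Type*} [AddGroup A] (v : A) (k l : ℤ) :
    closure {k • v, l • v} = zmultiples ((k.gcd l : ℤ) • v) := by
  have h := (zmultiplesHom A v).map_closure {k, l}
  rwa [Int.closure_eq_zmultiples, AddMonoidHom.map_zmultiples, Set.image_pair,
    zmultiplesHom_apply, zmultiplesHom_apply, zmultiplesHom_apply, eq_comm] at h

theorem AddSubgroup.closure_pair_zsmul_eq_zmultiples_iff {A : Type*} [AddGroup A] (v : A)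
    (k l : ℤ) :
    closure {k • v, l • v} = zmultiples v ↔ (k.gcd l).Coprime (addOrderOf v) := by
  rw [closure_pair_zsmul, le_antisymm_iff,
    and_iff_right (zmultiples_le_of_mem (zsmul_mem (mem_zmultiples v) _)), zmultiples_le,
    mem_zmultiples_zsmul_iff]
  rfl

theorem closure_pair_natCast_mul_eq_zmultiples_iff {R : Type*} [Ring R] [IsAddTorsionFree R]
    {v : R} (hv : v ≠ 0) (k l : ℕ) :
    AddSubgroup.closure {(k : R) * v, (l : R) * v} = AddSubgroup.zmultiples v ↔ k.Coprime l := by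
  have h := AddSubgroup.closure_pair_zsmul_eq_zmultiples_iff v k l
  rwa [addOrderOf_eq_zero (not_isOfFinAddOrder_of_isAddTorsionFree hv), Nat.coprime_zero_right,
    Int.gcd_natCast_natCast, natCast_zsmul, natCast_zsmul, nsmul_eq_mul, nsmul_eq_mul] at h

theorem Nat.card_pairs_mem_image_eq_card_filter {α β : Type*} {g : α → β} (hg : Injective g)
    (s : Finset α) (P : β × β → Prop) [DecidablePred (P ∘ Prod.map g g)] :
    Nat.card {x : β × β // x.1 ∈ g '' s ∧ x.2 ∈ g '' s ∧ P x} =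
      #{q ∈ s ×ˢ s | (P ∘ Prod.map g g) q} := by
  have h : {x : β × β | x.1 ∈ g '' s ∧ x.2 ∈ g '' s ∧ P x} =
      Prod.map g g '' ↑{q ∈ s ×ˢ s | (P ∘ Prod.map g g) q} := by
    ext ⟨x, y⟩
    simp only [Set.mem_ofPred_eq, Set.mem_image, coe_filter, mem_product, Prod.exists, Prod.map,
      Prod.mk.injEq, comp_apply]
    constructor
    · rintro ⟨⟨a, ha, rfl⟩, ⟨b, hb, rfl⟩, hP⟩
      exact ⟨a, b, ⟨⟨ha, hb⟩, hP⟩, rfl, rfl⟩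
    · rintro ⟨a, b, ⟨⟨ha, hb⟩, hP⟩, rfl, rfl⟩
      exact ⟨⟨a, ha, rfl⟩, ⟨b, hb, rfl⟩, hP⟩
  rw [← Set.ncard_coe_finset, ← Set.ncard_image_of_injective _ (hg.prodMap hg), ← h]
  exact Nat.card_coe_set_eq _

theorem Nat.card_pairs_mem_image {α β : Type*} {g : α → β} (hg : Injective g) (s : Finset α) :
    Nat.card {x : β × β // x.1 ∈ g '' s ∧ x.2 ∈ g '' s} = #s ^ 2 := by
  simpa [sq] using Nat.card_pairs_mem_image_eq_card_filter hg s (fun _ => True)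

theorem sum_inv_sq_le_of_forall_prime (S : Finset ℕ) (hS : ∀ p ∈ S, p.Prime) :
    ∑ p ∈ S, ((p : ℝ) ^ 2)⁻¹ ≤ 4⁻¹ + 9⁻¹ + 25⁻¹ + 6⁻¹ := by
  -- the primes `2, 3, 5`, then all integers `k > 6`, whose `k⁻²` telescope to at most `6⁻¹`
  set N := max 6 (S.sup id)
  have hsub : S ⊆ {2, 3, 5} ∪ Ioc 6 N := by
    intro p hp
    rcases le_or_gt p 6 with hp6 | hp6
    · have hpr := hS p hp
      refine mem_union_left _ ?_
      interval_cases p <;> revert hpr <;> decide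
    · exact mem_union_right _ (mem_Ioc.2 ⟨hp6, le_max_of_le_right (le_sup (f := id) hp)⟩)
  have hdisj : Disjoint ({2, 3, 5} : Finset ℕ) (Ioc 6 N) := by
    simp [disjoint_left]
  calc ∑ p ∈ S, ((p : ℝ) ^ 2)⁻¹
      ≤ ∑ p ∈ {2, 3, 5} ∪ Ioc 6 N, ((p : ℝ) ^ 2)⁻¹ :=
        sum_le_sum_of_subset_of_nonneg hsub fun _ _ _ => by positivity
    _ = (4⁻¹ + 9⁻¹ + 25⁻¹) + ∑ p ∈ Ioc 6 N, ((p : ℝ) ^ 2)⁻¹ := by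
        rw [sum_union hdisj]; norm_num
    _ ≤ (4⁻¹ + 9⁻¹ + 25⁻¹) + ((6 : ℕ) : ℝ)⁻¹ := by
        grw [sum_Ioc_inv_sq_le_sub (by norm_num) (le_max_left 6 _)]
        simp
    _ = 4⁻¹ + 9⁻¹ + 25⁻¹ + 6⁻¹ := by norm_num

theorem card_filter_not_coprime_le (m : ℕ) :
    #{q ∈ Ioc 0 m ×ˢ Ioc 0 m | ¬ q.1.Coprime q.2} ≤ ∑ p ∈ Ioc 0 m with p.Prime, (m / p) ^ 2 := by
  calc #{q ∈ Ioc 0 m ×ˢ Ioc 0 m | ¬ q.1.Coprime q.2}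
      ≤ #((Ioc 0 m).filter Nat.Prime |>.biUnion fun p =>
          {k ∈ Ioc 0 m | p ∣ k} ×ˢ {k ∈ Ioc 0 m | p ∣ k}) := by
        refine card_le_card fun q hq => ?_
        simp only [mem_filter, mem_product, mem_Ioc] at hq
        obtain ⟨⟨⟨hk0, hkm⟩, hl0, hlm⟩, hq⟩ := hq
        obtain ⟨p, hp, hpk, hpl⟩ := Nat.Prime.not_coprime_iff_dvd.1 hq
        simp only [mem_biUnion, mem_filter, mem_product, mem_Ioc]
        exact ⟨p, ⟨⟨hp.pos, (Nat.le_of_dvd hk0 hpk).trans hkm⟩, hp⟩,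
          ⟨⟨hk0, hkm⟩, hpk⟩, ⟨hl0, hlm⟩, hpl⟩
    _ ≤ ∑ p ∈ Ioc 0 m with p.Prime, (m / p) ^ 2 := by
        refine card_biUnion_le.trans_eq (sum_congr rfl fun p _ => ?_)
        rw [card_product, Nat.Ioc_filter_dvd_card_eq_div, sq]

theorem card_filter_not_coprime_le_mul_sq (m : ℕ) :
    (#{q ∈ Ioc 0 m ×ˢ Ioc 0 m | ¬ q.1.Coprime q.2} : ℝ) ≤ (4⁻¹ + 9⁻¹ + 25⁻¹ + 6⁻¹) * m ^ 2 := by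
  calc (#{q ∈ Ioc 0 m ×ˢ Ioc 0 m | ¬ q.1.Coprime q.2} : ℝ)
      ≤ ∑ p ∈ Ioc 0 m with p.Prime, (((m / p : ℕ) : ℝ)) ^ 2 := by
        exact_mod_cast card_filter_not_coprime_le m
    _ ≤ ∑ p ∈ Ioc 0 m with p.Prime, ((p : ℝ) ^ 2)⁻¹ * m ^ 2 := by
        gcongr with p
        rw [← div_eq_inv_mul, ← div_pow]
        gcongr
        exact Nat.cast_div_le
    _ ≤ (4⁻¹ + 9⁻¹ + 25⁻¹ + 6⁻¹) * m ^ 2 := by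
        rw [← sum_mul]
        gcongr
        exact sum_inv_sq_le_of_forall_prime _ fun p hp => (mem_filter.1 hp).2

theorem card_filter_coprime_range_ge {m : ℕ} (hm : 1 ≤ m) :
    (1 - (4⁻¹ + 9⁻¹ + 25⁻¹ + 6⁻¹)) * (m : ℝ) ^ 2 + 2 ≤
      #{q ∈ range (m + 1) ×ˢ range (m + 1) | q.1.Coprime q.2} := by
  set C := {q ∈ Ioc 0 m ×ˢ Ioc 0 m | q.1.Coprime q.2}
  have hsplit : (#C : ℝ) + #{q ∈ Ioc 0 m ×ˢ Ioc 0 m | ¬ q.1.Coprime q.2} = m ^ 2 := by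
    rw [← Nat.cast_add, card_filter_add_card_filter_not]
    simp [sq]
  have hsub : insert (0, 1) (insert (1, 0) C) ⊆
      {q ∈ range (m + 1) ×ˢ range (m + 1) | q.1.Coprime q.2} := by
    intro q hq
    simp only [C, mem_insert, mem_filter, mem_product, mem_Ioc, mem_range] at hq ⊢
    rcases hq with rfl | rfl | ⟨⟨⟨-, hk⟩, -, hl⟩, hq⟩ <;> simp_all <;> omega
  have hcard : (#C : ℝ) + 2 ≤ #{q ∈ range (m + 1) ×ˢ range (m + 1) | q.1.Coprime q.2} := by
    have h := card_le_card hsub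
    rw [card_insert_of_notMem (by simp [C]), card_insert_of_notMem (by simp [C])] at h
    exact_mod_cast h
  linarith [card_filter_not_coprime_le_mul_sq m]

theorem card_filter_coprime_range_gt {n : ℕ} (hn : 2 ≤ n) :
    3 ^ 3 / (π ^ 2 * 2 ^ 3) * (n : ℝ) ^ 2 < #{q ∈ range n ×ˢ range n | q.1.Coprime q.2} := by
  obtain ⟨m, rfl⟩ : ∃ m, n = m + 1 := ⟨n - 1, by omega⟩
  refine lt_of_lt_of_le ?_ (card_filter_coprime_range_ge (by omega))
  have hπ : 3.14 ^ 2 < π ^ 2 := by gcongr; exact pi_gt_d2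
  rw [div_mul_eq_mul_div, div_lt_iff₀ (by positivity)]
  push_cast
  calc 3 ^ 3 * ((m : ℝ) + 1) ^ 2
      ≤ ((1 - (4⁻¹ + 9⁻¹ + 25⁻¹ + 6⁻¹)) * m ^ 2 + 2) * (3.14 ^ 2 * 2 ^ 3) := by
        nlinarith [sq_nonneg ((m : ℝ) - 4)]
    _ < ((1 - (4⁻¹ + 9⁻¹ + 25⁻¹ + 6⁻¹)) * m ^ 2 + 2) * (π ^ 2 * 2 ^ 3) := by
        gcongr

theorem setOf_intCast_mul_mem_Ico_eq_image {v : ℝ} (hv : 0 < v) (r : ℝ) :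
    {x ∈ {x : ℝ | ∃ k : ℤ, x = k * v} | 0 ≤ x ∧ x < r} =
      (fun k : ℕ => (k : ℝ) * v) '' ↑(range ⌈r / v⌉₊) := by
  ext x
  constructor
  · rintro ⟨⟨k, rfl⟩, hx0, hxr⟩
    lift k to ℕ using (by exact_mod_cast (mul_nonneg_iff_of_pos_right hv).1 hx0)
    exact ⟨k, mem_range.2 (Nat.lt_ceil.2 ((lt_div_iff₀ hv).2 (by exact_mod_cast hxr))), by simp⟩
  · rintro ⟨k, hk, rfl⟩
    exact ⟨⟨k, by simp⟩, by positivity, (lt_div_iff₀ hv).1 (Nat.lt_ceil.1 (mem_range.1 hk))⟩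

/-- Let `L = ℤv` with `v > 0` and `b ≥ 3v + 1`. Then among all pairs of elements of
`L ∩ [0,b)`, the fraction of pairs generating `L` is greater than `3³/(π²·2³) > 1/3`. -/
theorem one_dim_lattice_generation (v r : ℝ) (hv : 0 < v) (hr : r ≥ 3 * v + 1)
    (L : Set ℝ) (hL : L = {x : ℝ | ∃ k : ℤ, x = k * v})
    (F : Set ℝ) (hF : F = {x ∈ L | 0 ≤ x ∧ x < r}) :
    ((Nat.card {x : ℝ × ℝ // x.1 ∈ F ∧ x.2 ∈ F ∧
          AddSubgroup.closure {x.1, x.2} = AddSubgroup.zmultiples v} : ℝ)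
        > (3^3 / (Real.pi^2 * 2^3))
          * (Nat.card {x : ℝ × ℝ // x.1 ∈ F ∧ x.2 ∈ F} : ℝ)) ∧
    ((3:ℝ)^3 / (Real.pi^2 * 2^3) > 1/3) := by
  refine ⟨?_, ?_⟩
  · classical
    have hinj : Injective fun k : ℕ => (k : ℝ) * v :=
      (mul_left_injective₀ hv.ne').comp Nat.cast_injective
    have hn : 2 ≤ ⌈r / v⌉₊ := Nat.lt_ceil.2 ((lt_div_iff₀ hv).2 (by push_cast; linarith))
    rw [hF, hL, setOf_intCast_mul_mem_Ico_eq_image hv, Nat.card_pairs_mem_image hinj,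
      Nat.card_pairs_mem_image_eq_card_filter hinj,
      filter_congr fun q _ => closure_pair_natCast_mul_eq_zmultiples_iff hv.ne' q.1 q.2,
      card_range]
    exact_mod_cast card_filter_coprime_range_gt hn
  · have hπ : π ^ 2 < 3.15 ^ 2 := by gcongr; exact pi_lt_d2
    rw [gt_iff_lt, lt_div_iff₀ (by positivity)]
    linarith
end

section
/- Let a₁,…,a_k be a generating set of a lattice L ⊆ ℝⁿ, let a′₁,…,a′_k ∈ ℝⁿ satisfy ‖a′_j − a_j‖₂ ≤ ε, let μ ≤ λ₁(L), and let z ∈ ℤᵏ be nonzero with 2ε‖z‖₁ < μ. Then ∑_j z_j a_j = 0 if and only if ‖∑_j z_j a′_j‖₂ ≤ ε‖z‖₁. -/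
/-! The perturbed combination `∑ z_j a′_j` lies within `ε‖z‖₁` of the lattice vector
`∑ z_j a_j`. So if `‖∑ z_j a′_j‖ ≤ ε‖z‖₁`, the lattice vector has norm at most
`2ε‖z‖₁ < μ ≤ λ₁(L)`, which forces it to be `0`. -/

open Finset

theorem norm_sum_smul_sub_sum_smul_le {ι E : Type*} [SeminormedAddCommGroup E]
    [NormedSpace ℝ E] (s : Finset ι) (c : ι → ℝ) (a a' : ι → E) {ε : ℝ}
    (h : ∀ j ∈ s, ‖a' j - a j‖ ≤ ε) :
    ‖∑ j ∈ s, c j • a' j - ∑ j ∈ s, c j • a j‖ ≤ ε * ∑ j ∈ s, |c j| := by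
  rw [← sum_sub_distrib, mul_sum]
  refine (norm_sum_le _ _).trans (sum_le_sum fun j hj => ?_)
  rw [← smul_sub, norm_smul, Real.norm_eq_abs, mul_comm]
  exact mul_le_mul_of_nonneg_right (h j hj) (abs_nonneg _)

theorem sum_intCast_smul_mem_span {ι E : Type*} [Fintype ι] [AddCommGroup E] [Module ℝ E]
    (z : ι → ℤ) (a : ι → E) :
    ∑ j, (z j : ℝ) • a j ∈ Submodule.span ℤ (Set.range a) :=
  Submodule.sum_mem _ fun j _ => by
    rw [Int.cast_smul_eq_zsmul]
    exact Submodule.smul_mem _ _ (Submodule.subset_span ⟨j, rfl⟩)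

theorem eq_zero_iff_norm_le_of_norm_sub_le {E : Type*} [SeminormedAddCommGroup E]
    {L : Set E} {μ δ : ℝ} (hμ : ∀ v ∈ L, v ≠ 0 → μ ≤ ‖v‖) (hδμ : 2 * δ < μ)
    {x y : E} (hx : x ∈ L) (hxy : ‖y - x‖ ≤ δ) :
    x = 0 ↔ ‖y‖ ≤ δ := by
  refine ⟨fun hx0 => by simpa [hx0] using hxy, fun hy => ?_⟩
  by_contra hx0
  have hx_small : ‖x‖ ≤ 2 * δ :=
    calc ‖x‖ ≤ ‖x - y‖ + ‖y‖ := norm_le_norm_sub_add x y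
      _ ≤ 2 * δ := by rw [norm_sub_rev]; linarith
  linarith [hμ x hx hx0]

theorem relation_characterization_general {n k : ℕ}
    (a a' : Fin k → EuclideanSpace ℝ (Fin n)) (ε μ : ℝ)
    (L : Submodule ℤ (EuclideanSpace ℝ (Fin n)))
    (hL : L = Submodule.span ℤ (Set.range a))
    (herr : ∀ j, ‖a' j - a j‖ ≤ ε)
    (hμ : ∀ v : EuclideanSpace ℝ (Fin n), v ∈ L → v ≠ 0 → μ ≤ ‖v‖)
    (z : Fin k → ℤ)
    (hzμ : 2 * ε * (∑ j, |(z j : ℝ)|) < μ) :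
    (∑ j, (z j : ℝ) • a j) = 0 ↔
      ‖∑ j, (z j : ℝ) • a' j‖ ≤ ε * ∑ j, |(z j : ℝ)| := by
  have hmem : ∑ j, (z j : ℝ) • a j ∈ L := hL ▸ sum_intCast_smul_mem_span z a
  exact eq_zero_iff_norm_le_of_norm_sub_le hμ (by linarith) hmem
    (norm_sum_smul_sub_sum_smul_le _ _ a a' fun j _ => herr j)

/-- Sufficient and necessary condition for relations: if `a₁,…,a_k` generate the
lattice `L`, `‖a′_j − a_j‖ ≤ ε`, `μ ≤ λ₁(L)` and `z ∈ ℤᵏ` is nonzero with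
`2ε‖z‖₁ < μ`, then `∑ z_j a_j = 0` iff `‖∑ z_j a′_j‖ ≤ ε‖z‖₁`. -/
theorem relation_characterization {n k : ℕ}
    (a a' : Fin k → EuclideanSpace ℝ (Fin n)) (ε μ : ℝ)
    (L : Submodule ℤ (EuclideanSpace ℝ (Fin n)))
    (hL : L = Submodule.span ℤ (Set.range a))
    (herr : ∀ j, ‖a' j - a j‖ ≤ ε)
    (hμ : ∀ v : EuclideanSpace ℝ (Fin n), v ∈ L → v ≠ 0 → μ ≤ ‖v‖)
    (z : Fin k → ℤ) (hz : z ≠ 0)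
    (hzμ : 2 * ε * (∑ j, |(z j : ℝ)|) < μ) :
    (∑ j, (z j : ℝ) • a j) = 0 ↔
      ‖∑ j, (z j : ℝ) • a' j‖ ≤ ε * ∑ j, |(z j : ℝ)| :=
  relation_characterization_general a a' ε μ L hL herr hμ z hzμ
end

section
/- Let L ⊆ ℝⁿ be a lattice of rank r generated by a₁,…,a_k with ‖a_j‖₂ ≤ α for all j. Then there exist k − r linearly independent relations m₁,…,m_{k−r} ∈ ℤᵏ (i.e., ∑_i (m_j)_i a_i = 0) with ‖m_j‖_∞ ≤ αʳ/det(L). -/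
/-!
Write `a j = ∑ t, B t j • c t` with an integer `r × k` matrix `B`. Since the `c t` in turn lie in
the `ℤ`-span of the `a j`, `B` has a right inverse, so some `r` columns `f` of `B` form a nonsingular
minor. For every other column `g`, Cramer's rule gives the integer relation
`∑ t, det (B with column f t replaced by column g) • a (f t) - det (B_f) • a g = 0`;
its entries are maximal minors of `B`, and the relations are independent because only the one
belonging to `g` involves `a g`. A maximal minor `B_h` is bounded via the Gram determinant:
`det (B_h) ^ 2 * det (Gram c) = det (Gram (a ∘ h)) ≤ ∏ t, ‖a (h t)‖ ^ 2 ≤ α ^ (2 r)` by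
Hadamard's inequality, and `det L = √(det (Gram c))`.
-/

open scoped RealInnerProductSpace
open Matrix Module Submodule Function

theorem exists_int_matrix_of_forall_mem_span (R : Type*) {E ι κ : Type*} [Ring R]
    [AddCommGroup E] [Module R E] [Fintype ι] {c : ι → E} {a : κ → E}
    (h : ∀ j, a j ∈ span ℤ (Set.range c)) :
    ∃ B : Matrix ι κ ℤ, ∀ j, a j = ∑ i, (B i j : R) • c i := by
  choose B hB using fun j => (mem_span_range_iff_exists_fun ℤ).1 (h j)
  exact ⟨of fun i j => B j i, fun j => by simp [← hB j, Int.cast_smul_eq_zsmul]⟩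

theorem Function.Injective.exists_injective_forall_ne {r k : ℕ} {f : Fin r → Fin k}
    (hf : Injective f) : ∃ g : Fin (k - r) → Fin k, Injective g ∧ ∀ j t, f t ≠ g j := by
  classical
  have hcard : Fintype.card ↥(Set.range f)ᶜ = k - r := by
    rw [Fintype.card_compl_set, Set.card_range_of_injective hf, Fintype.card_fin, Fintype.card_fin]
  let e := Fintype.equivFinOfCardEq hcard
  exact ⟨Subtype.val ∘ e.symm, Subtype.val_injective.comp e.symm.injective,
    fun j a h => (e.symm j).2 ⟨a, h⟩⟩

theorem linearIndependent_of_apply_eq_ite {K ι n : Type*} [Field K] [Fintype ι] [DecidableEq ι]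
    {v : ι → n → K} {g : ι → n} {d : K} (hd : d ≠ 0)
    (hv : ∀ j j', v j (g j') = if j = j' then d else 0) : LinearIndependent K v := by
  refine Fintype.linearIndependent_iff.2 fun q hq j => ?_
  have := congr_fun hq (g j)
  simp only [Finset.sum_apply, Pi.smul_apply, hv, smul_eq_mul, mul_ite, mul_zero,
    Finset.sum_ite_eq', Finset.mem_univ, if_true, Pi.zero_apply] at this
  exact (mul_eq_zero.1 this).resolve_right hd

namespace Matrix

section Gram

variable {E : Type*} [NormedAddCommGroup E] [InnerProductSpace ℝ E]

theorem gram_sum_smul {ι κ : Type*} [Fintype ι] (u : ι → E) (R : Matrix ι κ ℝ) :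
    gram ℝ (fun j => ∑ i, R i j • u i) = Rᵀ * gram ℝ u * R := by
  ext j j'
  simp only [gram_apply, mul_apply, transpose_apply, sum_inner, inner_sum, real_inner_smul_left,
    real_inner_smul_right, Finset.sum_mul]
  exact Finset.sum_congr rfl fun _ _ => Finset.sum_congr rfl fun _ _ => by ring

theorem det_gram_pos {ι : Type*} [Fintype ι] [DecidableEq ι] {v : ι → E}
    (hv : LinearIndependent ℝ v) : 0 < (gram ℝ v).det :=
  (posSemidef_gram ℝ v).det_nonneg.lt_of_ne (det_gram_ne_zero_iff_linearIndependent.2 hv).symm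

theorem det_gram_le_prod_norm_sq {ι : Type*} [Fintype ι] [DecidableEq ι] (v : ι → E) :
    (gram ℝ v).det ≤ ∏ i, ‖v i‖ ^ 2 := by
  by_cases hv : LinearIndependent ℝ v
  · let : LinearOrder ι := LinearOrder.lift' _ (Fintype.equivFin ι).injective
    let : LocallyFiniteOrderBot ι := .ofIic ι (fun a => {x | x ≤ a}) (by simp)
    have : FiniteDimensional ℝ (span ℝ (Set.range v)) := .span_of_finite ℝ (Set.finite_range v)
    let w : ι → span ℝ (Set.range v) := fun i => ⟨v i, subset_span ⟨i, rfl⟩⟩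
    -- an orthonormal basis of `span v` in which `w` is upper triangular
    let b := InnerProductSpace.gramSchmidtOrthonormalBasis (finrank_span_eq_card hv) w
    change (gram ℝ w).det ≤ _
    rw [gram_eq_conjTranspose_mul b, det_mul, det_conjTranspose]
    change star (b.toBasis.det w) * b.toBasis.det w ≤ _
    rw [InnerProductSpace.gramSchmidtOrthonormalBasis_det, star_trivial, ← sq, ← Finset.prod_pow]
    refine Finset.prod_le_prod (fun _ _ => sq_nonneg _) fun i _ => ?_
    calc ⟪b i, w i⟫ ^ 2 = |⟪b i, w i⟫| ^ 2 := (sq_abs _).symm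
      _ ≤ (‖b i‖ * ‖w i‖) ^ 2 := by gcongr; exact abs_real_inner_le_norm _ _
      _ = ‖v i‖ ^ 2 := by rw [b.orthonormal.1 i, one_mul]; rfl
  · rw [← det_gram_ne_zero_iff_linearIndependent (𝕜 := ℝ), not_not] at hv
    rw [hv]
    positivity

theorem abs_det_submatrix_mul_sqrt_det_gram_le {ι κ : Type*} [Fintype ι] [DecidableEq ι]
    (c : ι → E) (B : Matrix ι κ ℝ) (h : ι → κ) :
    |(B.submatrix id h).det| * √(gram ℝ c).det ≤ ∏ i, ‖∑ t, B t (h i) • c t‖ := by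
  have hgram := gram_sum_smul c (B.submatrix id h)
  calc |(B.submatrix id h).det| * √(gram ℝ c).det
      = √(gram ℝ fun i => ∑ t, B t (h i) • c t).det := by
        rw [show (fun i => ∑ t, B t (h i) • c t) = fun i => ∑ t, B.submatrix id h t i • c t
          from rfl, hgram, det_mul, det_mul, det_transpose, mul_right_comm, ← sq,
          Real.sqrt_mul (sq_nonneg _), Real.sqrt_sq_eq_abs]
    _ ≤ √(∏ i, ‖∑ t, B t (h i) • c t‖ ^ 2) := Real.sqrt_le_sqrt (det_gram_le_prod_norm_sq _)
    _ = ∏ i, ‖∑ t, B t (h i) • c t‖ := by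
        rw [Finset.prod_pow, Real.sqrt_sq (Finset.prod_nonneg fun _ _ => norm_nonneg _)]

end Gram

theorem sum_smul_sum_smul {R M ι κ : Type*} [CommSemiring R] [AddCommMonoid M] [Module R M]
    [Fintype ι] [Fintype κ] (c : ι → M) (B : Matrix ι κ R) (x : κ → R) :
    ∑ j, x j • ∑ i, B i j • c i = ∑ i, (B *ᵥ x) i • c i := by
  simp only [Finset.smul_sum, smul_smul, mulVec, dotProduct, Finset.sum_smul]
  rw [Finset.sum_comm]
  exact Finset.sum_congr rfl fun _ _ => Finset.sum_congr rfl fun _ _ => by rw [mul_comm]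

theorem mul_eq_one_of_linearIndependent {K M ι κ : Type*} [CommRing K] [AddCommGroup M]
    [Module K M] [Fintype ι] [DecidableEq ι] [Fintype κ] {c : ι → M} {a : κ → M}
    (hc : LinearIndependent K c) {B : Matrix ι κ K} {A : Matrix κ ι K}
    (hB : ∀ j, a j = ∑ i, B i j • c i) (hA : ∀ t, c t = ∑ j, A j t • a j) : B * A = 1 := by
  ext i t
  refine Fintype.linearIndependent_iffₛ.1 hc (fun i => (B * A) i t)
    (fun i => (1 : Matrix ι ι K) i t) ?_ i
  calc ∑ i, (B * A) i t • c i = ∑ i, (B *ᵥ fun j => A j t) i • c i := rfl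
    _ = ∑ j, A j t • ∑ i, B i j • c i := (sum_smul_sum_smul c B _).symm
    _ = c t := by simp only [← hB, ← hA]
    _ = ∑ i, (1 : Matrix ι ι K) i t • c i := by simp [one_apply]

theorem exists_injective_det_submatrix_ne_zero {K m n : Type*} [Field K] [Fintype m]
    [DecidableEq m] [Fintype n] {B : Matrix m n K} {A : Matrix n m K} (hBA : B * A = 1) :
    ∃ f : m → n, Injective f ∧ (B.submatrix id f).det ≠ 0 := by
  have hspan : span K (Set.range B.col) = ⊤ := by
    rw [← range_mulVecLin, LinearMap.range_eq_top]
    exact fun x => ⟨A *ᵥ x, by simp [mulVec_mulVec, hBA]⟩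
  obtain ⟨κ, g, hg, hspan_g, hli⟩ := exists_linearIndependent' K B.col
  have : Fintype κ := have := hli.finite; .ofFinite κ
  have hcard : Fintype.card κ = Fintype.card m := by
    rw [linearIndependent_iff_card_eq_finrank_span.1 hli, Set.finrank, hspan_g, hspan,
      finrank_top, finrank_fintype_fun_eq_card]
  let e := Fintype.equivOfCardEq hcard.symm
  refine ⟨g ∘ e, hg.comp e.injective, ?_⟩
  rw [← isUnit_iff_ne_zero, ← isUnit_iff_isUnit_det, ← linearIndependent_cols_iff_isUnit]
  exact hli.comp e e.injective

section CramerRelation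

variable {R m n : Type*} [CommRing R] [Fintype m] [DecidableEq m] [DecidableEq n]

/-- By Cramer's rule, `B.submatrix id f *ᵥ cramer (B.submatrix id f) (B.col g)` is
`det (B.submatrix id f) • B.col g`: a kernel vector of `B` supported on `range f ∪ {g}`. -/
def cramerRelation (B : Matrix m n R) (f : m → n) (g : n) : n → R :=
  ∑ t, Pi.single (f t) (cramer (B.submatrix id f) (B.col g) t) -
    Pi.single g (B.submatrix id f).det

variable (B : Matrix m n R) {f : m → n} {g : n}

theorem mulVec_cramerRelation [Fintype n] (f : m → n) (g : n) :
    B *ᵥ cramerRelation B f g = 0 := by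
  simp only [cramerRelation, mulVec_sub, mulVec_sum, mulVec_single, op_smul_eq_smul, sub_eq_zero]
  rw [← mulVec_cramer (B.submatrix id f) (B.col g), mulVec_eq_sum]
  simp only [op_smul_eq_smul]
  rfl

theorem cramerRelation_apply_of_ne {i : n} (hfi : ∀ t, f t ≠ i) (hgi : g ≠ i) :
    cramerRelation B f g i = 0 := by
  simp [cramerRelation, hfi, hgi]

theorem cramerRelation_apply_right (hfg : ∀ t, f t ≠ g) :
    cramerRelation B f g g = -(B.submatrix id f).det := by
  simp [cramerRelation, hfg]

theorem cramerRelation_apply_left (hf : Injective f) (hfg : ∀ t, f t ≠ g) (t : m) :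
    cramerRelation B f g (f t) = (B.submatrix id (update f t g)).det := by
  rw [cramerRelation, Pi.sub_apply, Pi.single_eq_of_ne (hfg t), sub_zero, Finset.sum_apply,
    Finset.sum_eq_single_of_mem t (Finset.mem_univ t) fun s _ hs => Pi.single_eq_of_ne
      (hf.ne hs.symm) _, Pi.single_eq_same, cramer_apply]
  congr 1
  ext i s
  rcases eq_or_ne s t with rfl | hs <;> simp [*]

theorem cramerRelation_apply_eq_ite {ι : Type*} [DecidableEq ι] {g : ι → n} (hg : Injective g)
    (hfg : ∀ j t, f t ≠ g j) (j j' : ι) :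
    cramerRelation B f (g j) (g j') = if j = j' then -(B.submatrix id f).det else 0 := by
  split_ifs with h
  · subst h
    exact cramerRelation_apply_right B (hfg j)
  · exact cramerRelation_apply_of_ne B (hfg j') (hg.ne h)

theorem exists_abs_cramerRelation_le [LinearOrder R] [IsStrictOrderedRing R] (hf : Injective f)
    (hfg : ∀ t, f t ≠ g) (i : n) :
    ∃ h : m → n, |cramerRelation B f g i| ≤ |(B.submatrix id h).det| := by
  by_cases hfi : ∃ t, f t = i
  · obtain ⟨t, rfl⟩ := hfi
    exact ⟨update f t g, by rw [cramerRelation_apply_left B hf hfg t]⟩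
  by_cases hgi : g = i
  · subst hgi
    exact ⟨f, by rw [cramerRelation_apply_right B hfg, abs_neg]⟩
  · exact ⟨f, by rw [cramerRelation_apply_of_ne B (not_exists.1 hfi) hgi, abs_zero]; positivity⟩

end CramerRelation

end Matrix

theorem relations_of_bounded_norm_general {n k r : ℕ}
    (a : Fin k → EuclideanSpace ℝ (Fin n)) (α : ℝ) (hα : ∀ j, ‖a j‖ ≤ α)
    (c : Fin r → EuclideanSpace ℝ (Fin n)) (hc : LinearIndependent ℝ c)
    (L : Submodule ℤ (EuclideanSpace ℝ (Fin n)))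
    (hLa : L = Submodule.span ℤ (Set.range a))
    (hLc : L = Submodule.span ℤ (Set.range c))
    (detL : ℝ)
    (hdet : detL = Real.sqrt (Matrix.of fun i j => ⟪c i, c j⟫).det) :
    ∃ m : Fin (k - r) → (Fin k → ℤ),
      LinearIndependent ℚ (fun j => fun i => ((m j i : ℚ))) ∧
      (∀ j, ∑ i, (m j i : ℝ) • a i = 0) ∧
      (∀ j i, (|m j i| : ℝ) ≤ α^r / detL) := by
  obtain ⟨B, hB⟩ := exists_int_matrix_of_forall_mem_span ℝ fun j =>
    show a j ∈ span ℤ (Set.range c) from hLc ▸ hLa ▸ subset_span ⟨j, rfl⟩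
  obtain ⟨A, hA⟩ := exists_int_matrix_of_forall_mem_span ℝ fun t =>
    show c t ∈ span ℤ (Set.range a) from hLa ▸ hLc ▸ subset_span ⟨t, rfl⟩
  obtain ⟨f, hf, hBf⟩ := exists_injective_det_submatrix_ne_zero
    (mul_eq_one_of_linearIndependent (B := B.map (↑)) (A := A.map (↑)) hc hB hA)
  rw [submatrix_map, ← Int.cast_det, Int.cast_ne_zero] at hBf
  obtain ⟨g, hg, hfg⟩ := hf.exists_injective_forall_ne
  have hdetL : 0 < detL := hdet ▸ Real.sqrt_pos.2 (det_gram_pos hc)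
  have hminor (h : Fin r → Fin k) : (|(B.submatrix id h).det| : ℝ) ≤ α ^ r / detL := by
    rw [le_div_iff₀ hdetL, hdet, Int.cast_det]
    refine (abs_det_submatrix_mul_sqrt_det_gram_le c (B.map (↑)) h).trans ?_
    simp only [map_apply, ← hB]
    calc ∏ i, ‖a (h i)‖ ≤ ∏ _i : Fin r, α :=
          Finset.prod_le_prod (fun _ _ => norm_nonneg _) fun i _ => hα (h i)
      _ = α ^ r := by simp
  refine ⟨fun j => cramerRelation B f (g j), ?_, fun j => ?_, fun j i => ?_⟩
  · refine linearIndependent_of_apply_eq_ite (g := g) (d := -((B.submatrix id f).det : ℚ))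
      (by simpa) fun j j' => ?_
    simp only [cramerRelation_apply_eq_ite B hg hfg]
    split_ifs <;> simp
  · simp_rw [hB, Int.cast_smul_eq_zsmul]
    rw [sum_smul_sum_smul, mulVec_cramerRelation]
    simp
  · obtain ⟨h, hh⟩ := exists_abs_cramerRelation_le B hf (hfg j) i
    exact le_trans (mod_cast hh) (hminor h)

/-- Linearly independent relations of bounded norm: if the lattice `L ⊆ ℝⁿ` of rank `r`
(with ℤ-basis `c`, so its covolume is `det(L) = √det(Gram c)`) is generated by
`a₁,…,a_k` with `‖a_j‖ ≤ α`, then there are `k − r` linearly independent relations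
`m₁,…,m_{k−r} ∈ ℤᵏ` with `‖m_j‖_∞ ≤ αʳ/det(L)`. -/
theorem relations_of_bounded_norm {n k r : ℕ} (hkr : r ≤ k)
    (a : Fin k → EuclideanSpace ℝ (Fin n)) (α : ℝ) (hα : ∀ j, ‖a j‖ ≤ α)
    (c : Fin r → EuclideanSpace ℝ (Fin n)) (hc : LinearIndependent ℝ c)
    (L : Submodule ℤ (EuclideanSpace ℝ (Fin n)))
    (hLa : L = Submodule.span ℤ (Set.range a))
    (hLc : L = Submodule.span ℤ (Set.range c))
    (detL : ℝ)
    (hdet : detL = Real.sqrt (Matrix.of fun i j => ⟪c i, c j⟫).det) :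
    ∃ m : Fin (k - r) → (Fin k → ℤ),
      LinearIndependent ℚ (fun j => fun i => ((m j i : ℚ))) ∧
      (∀ j, ∑ i, (m j i : ℝ) • a i = 0) ∧
      (∀ j i, (|m j i| : ℝ) ≤ α^r / detL) :=
  relations_of_bounded_norm_general a α hα c hc L hLa hLc detL hdet
end
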